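/- arXiv:2304.01332 — 2 statements merged into one kernel-verified Lean document; each statement's English description precedes it below -/
import Mathlib

section
/- Let A and B be C*-algebras with A unital. A completely positive map θ : A → B is order zero if and only if θ(a)θ(b) = θ(1_A)θ(ab) for all a, b ∈ A. -/
/-!
Complete positivity at the level of `2 × 2` matrices gives the Kadison–Schwarz inequality
`θ(x⋆y)⋆ θ(x⋆y) ≤ ‖θ(x⋆x)‖ θ(y⋆y)`, and with it order zero upgrades to `θ(x) θ(y z) = 0` for all
`z` whenever `x, y ≥ 0` and `x y = 0`. Fix `b`: the bilinear map `β(x, y) = θ(x) θ(y b)` then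
vanishes on orthogonal positive pairs and is bounded on positive contractions.

For `0 ≤ a ≤ 1` let `φᵢ = tentᵢ(a)`, the tent functions at the nodes `i / n` applied to `a`, so
that `1 = ∑ φᵢ` and `n a = ∑ i φᵢ`. Since `φᵢ φⱼ = 0` for `|i - j| ≥ 2`, the difference
`n (β(a, 1) - β(1, a)) = ∑ᵢ ∑ⱼ (i - j) β(φᵢ, φⱼ)` only involves neighbouring pairs; sorted by the
residue of `i` mod `3`, the neighbouring terms of each class add up to a single value `β(Ψ, Ξ)`
with `Ψ, Ξ` positive contractions. So `n ‖β(a, 1) - β(1, a)‖` is bounded independently of `n`,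
whence `θ(a) θ(b) = θ(1) θ(a b)`; positive contractions span `A`.
-/

open scoped ENNReal Matrix
open Filter

noncomputable section

/-- Complete positivity of a linear map between C⋆-algebra-like star rings, phrased via the
algebraic description of positivity: matrices of the form `Nᴴ * N` are mapped to matrices of
this form at every matrix level. -/
def CompletelyPositive {A B : Type*}
    [NonUnitalRing A] [StarRing A] [Module ℂ A]
    [NonUnitalRing B] [StarRing B] [Module ℂ B] (θ : A →ₗ[ℂ] B) : Prop :=
  ∀ (r : ℕ) (M : Matrix (Fin r) (Fin r) A),
    (∃ N : Matrix (Fin r) (Fin r) A, M = Nᴴ * N) →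
    ∃ N : Matrix (Fin r) (Fin r) B, M.map θ = Nᴴ * N

/-- The canonical C⋆-norm on matrices over a (possibly non-unital) C⋆-algebra, described
algebraically via positivity in matrices over the unitization. -/
def matNormGen {A : Type*} [NonUnitalRing A] [StarRing A] [Module ℂ A]
    [SMulCommClass ℂ A A] [IsScalarTower ℂ A A] [StarModule ℂ A] {r : ℕ}
    (M : Matrix (Fin r) (Fin r) A) : ℝ :=
  sInf {t : ℝ | 0 ≤ t ∧ ∃ N : Matrix (Fin r) (Fin r) (Unitization ℂ A),
    ((t : ℂ) ^ 2) • (1 : Matrix (Fin r) (Fin r) (Unitization ℂ A)) -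
      (M.map (Unitization.inr : A → Unitization ℂ A))ᴴ *
        (M.map (Unitization.inr : A → Unitization ℂ A)) = Nᴴ * N}

open Finset
open scoped WithCStarModule

theorem LinearMap.sum_apply_eq_apply_sum {R M N P ι : Type*} [CommSemiring R]
    [AddCommMonoid M] [AddCommMonoid N] [AddCommMonoid P] [Module R M] [Module R N] [Module R P]
    (β : M →ₗ[R] N →ₗ[R] P) (s : Finset ι) (x : ι → M) (y : ι → N)
    (h : ∀ i ∈ s, ∀ j ∈ s, i ≠ j → β (x i) (y j) = 0) :
    ∑ i ∈ s, β (x i) (y i) = β (∑ i ∈ s, x i) (∑ j ∈ s, y j) := by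
  simp only [map_sum, LinearMap.sum_apply]
  rw [sum_comm]
  exact sum_congr rfl fun i hi =>
    (sum_eq_single_of_mem i hi fun j hj hji => h i hi j hj hji.symm).symm

theorem Finset.sum_range_sum_range_nsmul_sub_nsmul {M : Type*} [AddCommGroup M]
    (g : ℕ → ℕ → M) (hg : ∀ i j, i + 2 ≤ j ∨ j + 2 ≤ i → g i j = 0) (m : ℕ) :
    ∑ i ∈ range (m + 1), ∑ j ∈ range (m + 1), (i • g i j - j • g i j) =
      ∑ j ∈ range m, (g (j + 1) j - g j (j + 1)) := by
  induction m with
  | zero => simp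
  | succ m ih =>
    have hrow : ∑ i ∈ range m, (i • g i (m + 1) - (m + 1) • g i (m + 1)) = 0 :=
      sum_eq_zero fun i hi => by
        rw [hg i (m + 1) (Or.inl (by simp at hi; omega)), smul_zero, smul_zero, sub_zero]
    have hcol : ∑ j ∈ range m, ((m + 1) • g (m + 1) j - j • g (m + 1) j) = 0 :=
      sum_eq_zero fun j hj => by
        rw [hg (m + 1) j (Or.inr (by simp at hj; omega)), smul_zero, smul_zero, sub_zero]
    rw [sum_range_succ _ (m + 1), sum_congr rfl fun i _ => sum_range_succ _ (m + 1),
      sum_add_distrib, ih, sum_range_succ, hrow, sum_range_succ, sum_range_succ, hcol,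
      sum_range_succ _ m]
    simp only [succ_nsmul, sub_self, zero_add]
    abel

def clampUnit (s : ℝ) : ℝ := max 0 (min 1 s)

@[fun_prop]
theorem continuous_clampUnit : Continuous clampUnit :=
  continuous_const.max (continuous_const.min continuous_id)

theorem monotone_clampUnit : Monotone clampUnit := fun _ _ h =>
  max_le_max le_rfl (min_le_min le_rfl h)

theorem clampUnit_nonneg (s : ℝ) : 0 ≤ clampUnit s := le_max_left _ _

theorem clampUnit_le_one (s : ℝ) : clampUnit s ≤ 1 := max_le zero_le_one (min_le_left _ _)

theorem clampUnit_of_nonpos {s : ℝ} (h : s ≤ 0) : clampUnit s = 0 :=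
  max_eq_left ((min_le_right _ _).trans h)

theorem clampUnit_of_one_le {s : ℝ} (h : 1 ≤ s) : clampUnit s = 1 := by
  rw [clampUnit, min_eq_left h, max_eq_right zero_le_one]

theorem clampUnit_of_mem_Icc {s : ℝ} (h : s ∈ Set.Icc 0 1) : clampUnit s = s := by
  rw [clampUnit, min_eq_right h.2, max_eq_right h.1]

theorem sum_range_clampUnit_sub {s : ℝ} (m : ℕ) (hs : s ∈ Set.Icc 0 (m : ℝ)) :
    ∑ j ∈ range m, clampUnit (s - j) = s := by
  induction m generalizing s with
  | zero =>
    simp only [Nat.cast_zero, Set.Icc_self, Set.mem_singleton_iff] at hs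
    simp [hs]
  | succ m ih =>
    rw [sum_range_succ']
    rcases le_or_gt s 1 with hs1 | hs1
    · rw [sum_eq_zero fun j _ => clampUnit_of_nonpos (by push_cast; linarith), zero_add,
        Nat.cast_zero, sub_zero, clampUnit_of_mem_Icc ⟨hs.1, hs1⟩]
    · have := ih (s := s - 1) ⟨by linarith, by push_cast at hs; linarith [hs.2]⟩
      simp only [Nat.cast_add, Nat.cast_one, Nat.cast_zero, sub_zero, sub_add_eq_sub_sub_swap]
        at this ⊢
      rw [this, clampUnit_of_one_le hs1.le, sub_add_cancel]

/-- The ramp rising from `0` at `t = (i - 1) / n` to `1` at `t = i / n`. -/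
def ramp (n i : ℕ) (t : ℝ) : ℝ := clampUnit (n * t + 1 - i)

/-- The tent of height `1` centred at `i / n`, supported in `[(i - 1) / n, (i + 1) / n]`. -/
def tent (n i : ℕ) (t : ℝ) : ℝ := ramp n i t - ramp n (i + 1) t

@[fun_prop]
theorem continuous_tent (n i : ℕ) : Continuous (tent n i) := by
  unfold tent ramp
  fun_prop

theorem tent_nonneg (n i : ℕ) (t : ℝ) : 0 ≤ tent n i t :=
  sub_nonneg.mpr (monotone_clampUnit (by push_cast; linarith))

theorem tent_mul_tent {n i j : ℕ} (h : i + 2 ≤ j ∨ j + 2 ≤ i) (t : ℝ) :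
    tent n i t * tent n j t = 0 := by
  have hij : (i : ℝ) + 2 ≤ j ∨ (j : ℝ) + 2 ≤ i := by exact_mod_cast h
  have hzero {k : ℕ} (h : n * t + 1 ≤ k ∨ k + 1 ≤ n * t) : tent n k t = 0 := by
    unfold tent ramp
    push_cast
    rcases h with h | h
    · rw [clampUnit_of_nonpos (by linarith), clampUnit_of_nonpos (by linarith), sub_zero]
    · rw [clampUnit_of_one_le (by linarith), clampUnit_of_one_le (by linarith), sub_self]
  by_contra hne
  obtain ⟨hi, hj⟩ := mul_ne_zero_iff.mp hne
  have hi' := mt hzero hi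
  have hj' := mt hzero hj
  push Not at hi' hj'
  rcases hij with hij | hij <;> linarith [hi'.1, hi'.2, hj'.1, hj'.2]

theorem sum_range_tent (n m : ℕ) (t : ℝ) :
    ∑ i ∈ range m, tent n i t = ramp n 0 t - ramp n m t :=
  sum_range_sub' (fun i => ramp n i t) m

theorem sum_tent_le_one (n : ℕ) (s : Finset ℕ) (t : ℝ) : ∑ i ∈ s, tent n i t ≤ 1 := by
  calc ∑ i ∈ s, tent n i t ≤ ∑ i ∈ range (s.sup id + 1), tent n i t :=
        sum_le_sum_of_subset_of_nonneg (subset_range_sup_succ s) fun i _ _ => tent_nonneg n i t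
    _ ≤ 1 := by
        rw [sum_range_tent]
        have h0 : ramp n 0 t ≤ 1 := clampUnit_le_one _
        have h1 : 0 ≤ ramp n (s.sup id + 1) t := clampUnit_nonneg _
        linarith

theorem sum_range_tent_eq_one (n : ℕ) {t : ℝ} (ht : t ∈ Set.Icc 0 1) :
    ∑ i ∈ range (n + 1), tent n i t = 1 := by
  have : (n : ℝ) * t ≤ n := mul_le_of_le_one_right n.cast_nonneg ht.2
  rw [sum_range_tent, ramp, ramp, clampUnit_of_one_le (by push_cast; nlinarith [ht.1]),
    clampUnit_of_nonpos (by push_cast; linarith), sub_zero]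

theorem sum_range_mul_tent (n : ℕ) {t : ℝ} (ht : t ∈ Set.Icc 0 1) :
    ∑ i ∈ range (n + 1), (i : ℝ) * tent n i t = n * t := by
  have hnt : (n : ℝ) * t ∈ Set.Icc 0 (n : ℝ) :=
    ⟨mul_nonneg n.cast_nonneg ht.1, mul_le_of_le_one_right n.cast_nonneg ht.2⟩
  have summation_by_parts (m : ℕ) : ∑ i ∈ range m, (i : ℝ) * tent n i t =
      ∑ i ∈ range m, ramp n (i + 1) t - m * ramp n m t := by
    induction m with
    | zero => simp
    | succ m ih => rw [sum_range_succ, ih, sum_range_succ, tent]; push_cast; ring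
  have hlast : ramp n (n + 1) t = 0 := clampUnit_of_nonpos (by push_cast; linarith [hnt.2])
  rw [summation_by_parts, sum_range_succ, hlast, add_zero, mul_zero, sub_zero,
    ← sum_range_clampUnit_sub n hnt]
  refine sum_congr rfl fun i _ => ?_
  rw [ramp]
  push_cast
  ring_nf

section CStarAlgebra

variable {A : Type*} [CStarAlgebra A]

theorem cfc_tent_mul_cfc_tent {n i j : ℕ} (h : i + 2 ≤ j ∨ j + 2 ≤ i) (a : A) :
    cfc (tent n i) a * cfc (tent n j) a = 0 := by
  rw [← cfc_mul .., funext (tent_mul_tent h), ← Pi.zero_def, cfc_zero]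

theorem norm_sum_cfc_tent_le_one (n : ℕ) {w : ℕ → ℕ} (hw : Function.Injective w)
    (s : Finset ℕ) (a : A) : ‖∑ j ∈ s, cfc (tent n (w j)) a‖ ≤ 1 := by
  rw [← cfc_sum ..]
  refine norm_cfc_le zero_le_one fun t _ => ?_
  rw [Finset.sum_apply, Real.norm_of_nonneg (sum_nonneg fun j _ => tent_nonneg n _ t),
    ← sum_image (f := fun i => tent n i t) hw.injOn]
  exact sum_tent_le_one n _ t

variable [PartialOrder A] [StarOrderedRing A]

theorem mem_Icc_of_mem_spectrum {a : A} (ha : 0 ≤ a) (ha1 : ‖a‖ ≤ 1) {t : ℝ}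
    (ht : t ∈ spectrum ℝ a) : t ∈ Set.Icc 0 1 :=
  ⟨spectrum_nonneg_of_nonneg ha ht,
    (CFC.le_one_iff a).mp ((CStarAlgebra.norm_le_one_iff_of_nonneg a ha).mp ha1) t ht⟩

theorem cfc_tent_nonneg (n i : ℕ) (a : A) : 0 ≤ cfc (tent n i) a :=
  cfc_nonneg fun t _ => tent_nonneg n i t

theorem sum_range_cfc_tent (n : ℕ) {a : A} (ha : 0 ≤ a) (ha1 : ‖a‖ ≤ 1) :
    ∑ i ∈ range (n + 1), cfc (tent n i) a = 1 := by
  rw [← cfc_sum .., ← cfc_one ℝ a]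
  exact cfc_congr fun t ht => by
    simpa using sum_range_tent_eq_one n (mem_Icc_of_mem_spectrum ha ha1 ht)

theorem sum_range_nsmul_cfc_tent (n : ℕ) {a : A} (ha : 0 ≤ a) (ha1 : ‖a‖ ≤ 1) :
    ∑ i ∈ range (n + 1), i • cfc (tent n i) a = n • a := by
  rw [← cfc_smul_id (R := ℝ) n a]
  simp_rw [← cfc_smul (R := ℝ) _ (tent n _) a (continuous_tent n _).continuousOn]
  rw [← cfc_sum (fun i t => i • tent n i t) a]
  exact cfc_congr fun t ht => by
    simpa [nsmul_eq_mul] using sum_range_mul_tent n (mem_Icc_of_mem_spectrum ha ha1 ht)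

end CStarAlgebra

section Bilinear

variable {A C : Type*} [CStarAlgebra A] [PartialOrder A] [StarOrderedRing A]
  [NormedAddCommGroup C] [NormedSpace ℂ C] (β : A →ₗ[ℂ] A →ₗ[ℂ] C) (M : ℝ)

theorem norm_sum_range_apply_cfc_tent_succ_le
    (horth : ∀ x y : A, 0 ≤ x → 0 ≤ y → x * y = 0 → β x y = 0)
    (hbd : ∀ x y : A, 0 ≤ x → ‖x‖ ≤ 1 → 0 ≤ y → ‖y‖ ≤ 1 → ‖β x y‖ ≤ M) (n : ℕ) (a : A) :
    ‖∑ j ∈ range n, β (cfc (tent n j) a) (cfc (tent n (j + 1)) a)‖ ≤ 3 * M := by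
  rw [← sum_fiberwise_of_maps_to (g := (· % 3)) (t := range 3)
    fun j _ => mem_range.mpr (Nat.mod_lt j three_pos)]
  calc _ ≤ ∑ r ∈ range 3, ‖∑ j ∈ range n with j % 3 = r,
          β (cfc (tent n j) a) (cfc (tent n (j + 1)) a)‖ := norm_sum_le _ _
    _ ≤ ∑ r ∈ range 3, M := sum_le_sum fun r _ => ?_
    _ = 3 * M := by simp
  -- within one residue class mod 3 only the diagonal terms survive
  rw [LinearMap.sum_apply_eq_apply_sum]
  · exact hbd _ _ (sum_nonneg fun j _ => cfc_tent_nonneg n j a)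
      (norm_sum_cfc_tent_le_one n Function.injective_id _ a)
      (sum_nonneg fun j _ => cfc_tent_nonneg n (j + 1) a)
      (norm_sum_cfc_tent_le_one n (add_left_injective 1) _ a)
  · intro j hj k hk hjk
    simp only [mem_filter] at hj hk
    exact horth _ _ (cfc_tent_nonneg n j a) (cfc_tent_nonneg n (k + 1) a)
      (cfc_tent_mul_cfc_tent (by omega) a)

theorem LinearMap.apply_one_eq_of_nonneg_of_norm_le_one
    (horth : ∀ x y : A, 0 ≤ x → 0 ≤ y → x * y = 0 → β x y = 0)
    (hbd : ∀ x y : A, 0 ≤ x → ‖x‖ ≤ 1 → 0 ≤ y → ‖y‖ ≤ 1 → ‖β x y‖ ≤ M) {a : A} (ha : 0 ≤ a)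
    (ha1 : ‖a‖ ≤ 1) : β a 1 = β 1 a := by
  have horth_flip (x y : A) (hx : 0 ≤ x) (hy : 0 ≤ y) (hxy : x * y = 0) : β.flip x y = 0 :=
    horth y x hy hx <| by
      simpa [(IsSelfAdjoint.of_nonneg hx).star_eq, (IsSelfAdjoint.of_nonneg hy).star_eq] using
        congrArg star hxy
  have hbd_flip (x y : A) (hx : 0 ≤ x) (hx1 : ‖x‖ ≤ 1) (hy : 0 ≤ y) (hy1 : ‖y‖ ≤ 1) :
      ‖β.flip x y‖ ≤ M :=
    hbd y x hy hy1 hx hx1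
  suffices h : ∀ n : ℕ, n * ‖β a 1 - β 1 a‖ ≤ 6 * M by
    by_contra hne
    have hpos : 0 < ‖β a 1 - β 1 a‖ := norm_pos_iff.mpr (sub_ne_zero.mpr hne)
    obtain ⟨n, hn⟩ := exists_nat_gt (6 * M / ‖β a 1 - β 1 a‖)
    linarith [h n, (div_lt_iff₀ hpos).mp hn]
  intro n
  set φ : ℕ → A := fun i => cfc (tent n i) a
  have hband (i j : ℕ) (h : i + 2 ≤ j ∨ j + 2 ≤ i) : β (φ i) (φ j) = 0 :=
    horth _ _ (cfc_tent_nonneg n i a) (cfc_tent_nonneg n j a) (cfc_tent_mul_cfc_tent h a)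
  have hneighbours : n • (β a 1 - β 1 a) =
      ∑ j ∈ Finset.range n, (β (φ (j + 1)) (φ j) - β (φ j) (φ (j + 1))) := by
    rw [← sum_range_sum_range_nsmul_sub_nsmul _ hband, smul_sub, ← LinearMap.smul_apply,
      ← map_nsmul, ← map_nsmul, ← sum_range_nsmul_cfc_tent n ha ha1,
      ← sum_range_cfc_tent n ha ha1]
    simp only [map_sum, map_nsmul, LinearMap.sum_apply, LinearMap.smul_apply, smul_sum,
      ← sum_sub_distrib]
    exact sum_comm
  calc n * ‖β a 1 - β 1 a‖ = ‖n • (β a 1 - β 1 a)‖ := by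
        rw [RCLike.norm_nsmul ℝ, nsmul_eq_mul]
    _ ≤ ‖∑ j ∈ Finset.range n, β.flip (φ j) (φ (j + 1))‖ +
          ‖∑ j ∈ Finset.range n, β (φ j) (φ (j + 1))‖ := by
        rw [hneighbours, sum_sub_distrib]
        exact norm_sub_le _ _
    _ ≤ 3 * M + 3 * M :=
        add_le_add (norm_sum_range_apply_cfc_tent_succ_le _ M horth_flip hbd_flip n a)
          (norm_sum_range_apply_cfc_tent_succ_le β M horth hbd n a)
    _ = 6 * M := by ring

theorem LinearMap.apply_one_eq_of_orthogonal
    (horth : ∀ x y : A, 0 ≤ x → 0 ≤ y → x * y = 0 → β x y = 0)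
    (hbd : ∀ x y : A, 0 ≤ x → ‖x‖ ≤ 1 → 0 ≤ y → ‖y‖ ≤ 1 → ‖β x y‖ ≤ M) (a : A) :
    β a 1 = β 1 a := by
  have : β.flip 1 = β 1 :=
    LinearMap.ext_on CStarAlgebra.span_nonneg_inter_unitClosedBall fun x ⟨hx, hx1⟩ =>
      β.apply_one_eq_of_nonneg_of_norm_le_one M horth hbd hx (mem_closedBall_zero_iff.mp hx1)
  exact LinearMap.congr_fun this a

end Bilinear

section CStarInequalities

variable {B : Type*} [NonUnitalCStarAlgebra B] [PartialOrder B] [StarOrderedRing B]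

theorem star_sum_mul_sum_le {ι : Type*} [Fintype ι] (p q : ι → B) :
    star (∑ k, star (p k) * q k) * ∑ k, star (p k) * q k ≤
      ‖∑ k, star (p k) * p k‖ • ∑ k, star (q k) * q k := by
  let x : C⋆ᵐᵒᵈ(B, ι → B) := (WithCStarModule.equiv B (ι → B)).symm (star p)
  let y : C⋆ᵐᵒᵈ(B, ι → B) := (WithCStarModule.equiv B (ι → B)).symm (star q)
  have h := CStarModule.inner_mul_inner_swap_le (A := B) (x := x) (y := y)
  rw [CStarModule.norm_sq_eq (A := B)] at h
  simpa [x, y, WithCStarModule.pi_inner, WithCStarModule.inner_def, star_sum] using h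

theorem mul_eq_zero_of_star_mul_self_le_smul {p q z w : B} (hp : 0 ≤ p) (hq : 0 ≤ q)
    (hpq : p * q = 0) {α β : ℝ} (hz : star z * z ≤ α • p) (hw : w * star w ≤ β • q) :
    z * w = 0 := by
  set s := CFC.sqrt p
  have hs : star s = s := (IsSelfAdjoint.of_nonneg (CFC.sqrt_nonneg p)).star_eq
  have hsq : s * q = 0 := by
    rw [← CStarRing.star_mul_self_eq_zero_iff, star_mul, hs,
      (IsSelfAdjoint.of_nonneg hq).star_eq, mul_assoc, ← mul_assoc s,
      CFC.sqrt_mul_sqrt_self p hp, hpq, mul_zero]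
  have hsw : s * w = 0 := by
    rw [← CStarRing.mul_star_self_eq_zero_iff]
    refine le_antisymm ?_ (mul_star_self_nonneg _)
    calc s * w * star (s * w) = star s * (w * star w) * s := by
          rw [star_mul, hs]; noncomm_ring
      _ ≤ star s * (β • q) * s := star_left_conjugate_le_conjugate hw s
      _ = 0 := by rw [hs, mul_smul_comm, hsq, smul_zero, zero_mul]
  rw [← CStarRing.star_mul_self_eq_zero_iff]
  refine le_antisymm ?_ (star_mul_self_nonneg _)
  calc star (z * w) * (z * w) = star w * (star z * z) * w := by
        rw [star_mul, mul_assoc, mul_assoc, mul_assoc]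
    _ ≤ star w * (α • p) * w := star_left_conjugate_le_conjugate hz w
    _ = 0 := by
        rw [← CFC.sqrt_mul_sqrt_self p hp, mul_smul_comm, smul_mul_assoc, mul_assoc, mul_assoc,
          hsw, mul_zero, mul_zero, smul_zero]

end CStarInequalities

namespace CompletelyPositive

section Ring

variable {A B : Type*} [NonUnitalRing A] [StarRing A] [Module ℂ A]
  [NonUnitalRing B] [StarRing B] [Module ℂ B] {θ : A →ₗ[ℂ] B}

theorem exists_gram (hθ : CompletelyPositive θ) (x y : A) :
    ∃ p q : Fin 2 → B,
      θ (star x * x) = ∑ k, star (p k) * p k ∧ θ (star x * y) = ∑ k, star (p k) * q k ∧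
      θ (star y * x) = ∑ k, star (q k) * p k ∧ θ (star y * y) = ∑ k, star (q k) * q k := by
  obtain ⟨P, hP⟩ := hθ 2 _ ⟨!![x, y; 0, 0], rfl⟩
  have h (i j : Fin 2) := congr_fun₂ hP i j
  simp only [Matrix.map_apply, Matrix.mul_apply, Matrix.conjTranspose_apply] at h
  exact ⟨fun k => P k 0, fun k => P k 1, by simpa using h 0 0, by simpa using h 0 1,
    by simpa using h 1 0, by simpa using h 1 1⟩

theorem star_map_star_mul (hθ : CompletelyPositive θ) (x y : A) :
    star (θ (star x * y)) = θ (star y * x) := by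
  obtain ⟨p, q, -, hxy, hyx, -⟩ := hθ.exists_gram x y
  simp [hxy, hyx]

theorem map_star_mul_self_nonneg [PartialOrder B] [StarOrderedRing B]
    (hθ : CompletelyPositive θ) (x : A) : 0 ≤ θ (star x * x) := by
  obtain ⟨p, -, hxx, -⟩ := hθ.exists_gram x 0
  exact hxx ▸ Finset.sum_nonneg fun k _ => star_mul_self_nonneg (p k)

end Ring

theorem map_star {A B : Type*} [Ring A] [StarRing A] [Module ℂ A]
    [NonUnitalRing B] [StarRing B] [Module ℂ B] {θ : A →ₗ[ℂ] B}
    (hθ : CompletelyPositive θ) (x : A) : θ (star x) = star (θ x) := by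
  simpa using (hθ.star_map_star_mul 1 x).symm

theorem star_map_mul_map_le_norm_smul {A B : Type*} [NonUnitalRing A] [StarRing A] [Module ℂ A]
    [NonUnitalCStarAlgebra B] [PartialOrder B] [StarOrderedRing B] {θ : A →ₗ[ℂ] B}
    (hθ : CompletelyPositive θ) (x y : A) :
    star (θ (star x * y)) * θ (star x * y) ≤ ‖θ (star x * x)‖ • θ (star y * y) := by
  obtain ⟨p, q, hxx, hxy, -, hyy⟩ := hθ.exists_gram x y
  rw [hxx, hxy, hyy]
  exact star_sum_mul_sum_le p q

variable {A B : Type*} [CStarAlgebra A] [PartialOrder A] [StarOrderedRing A]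
  [NonUnitalCStarAlgebra B] [PartialOrder B] [StarOrderedRing B] {θ : A →ₗ[ℂ] B}

theorem map_nonneg (hθ : CompletelyPositive θ) {x : A} (hx : 0 ≤ x) : 0 ≤ θ x := by
  obtain ⟨c, rfl⟩ := CStarAlgebra.nonneg_iff_eq_star_mul_self.mp hx
  exact hθ.map_star_mul_self_nonneg c

theorem map_le_map (hθ : CompletelyPositive θ) {x y : A} (h : x ≤ y) : θ x ≤ θ y := by
  simpa using hθ.map_nonneg (sub_nonneg.mpr h)

theorem norm_map_le_norm_map_one (hθ : CompletelyPositive θ) {x : A} (hx : 0 ≤ x)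
    (hx1 : ‖x‖ ≤ 1) : ‖θ x‖ ≤ ‖θ 1‖ :=
  CStarAlgebra.norm_le_norm_of_nonneg_of_le (hθ.map_nonneg hx)
    (hθ.map_le_map ((CStarAlgebra.norm_le_one_iff_of_nonneg x hx).mp hx1))

theorem norm_map_mul_le (hθ : CompletelyPositive θ) {y : A} (hy : 0 ≤ y) (hy1 : ‖y‖ ≤ 1)
    (b : A) : ‖θ (y * b)‖ ≤ √(‖θ 1‖ * ‖θ (star b * b)‖) := by
  have hyy : ‖θ (y * y)‖ ≤ ‖θ 1‖ :=
    hθ.norm_map_le_norm_map_one (IsSelfAdjoint.of_nonneg hy).mul_self_nonneg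
      ((norm_mul_le y y).trans (by nlinarith [norm_nonneg y]))
  have hKS := hθ.star_map_mul_map_le_norm_smul y b
  rw [(IsSelfAdjoint.of_nonneg hy).star_eq] at hKS
  refine Real.le_sqrt_of_sq_le ?_
  calc ‖θ (y * b)‖ ^ 2 = ‖star (θ (y * b)) * θ (y * b)‖ := by
        rw [CStarRing.norm_star_mul_self, sq]
    _ ≤ ‖‖θ (y * y)‖ • θ (star b * b)‖ :=
        CStarAlgebra.norm_le_norm_of_nonneg_of_le (star_mul_self_nonneg _) hKS
    _ ≤ ‖θ 1‖ * ‖θ (star b * b)‖ := by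
        rw [norm_smul, norm_norm]
        exact mul_le_mul_of_nonneg_right hyy (norm_nonneg _)

theorem map_mul_map_mul_eq_zero (hθ : CompletelyPositive θ)
    (horth : ∀ x y : A, 0 ≤ x → 0 ≤ y → x * y = 0 → θ x * θ y = 0) {x y : A} (hx : 0 ≤ x)
    (hy : 0 ≤ y) (hxy : x * y = 0) (z : A) : θ x * θ (y * z) = 0 := by
  have hx' := IsSelfAdjoint.of_nonneg hx
  have hy' := IsSelfAdjoint.of_nonneg hy
  have hxx : 0 ≤ x * x := hx'.mul_self_nonneg
  have hyy : 0 ≤ y * y := hy'.mul_self_nonneg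
  -- Kadison–Schwarz dominates `θ x` by `θ (x * x)` and `θ (y * z)` by `θ (y * y)`,
  -- and these two are orthogonal.
  refine mul_eq_zero_of_star_mul_self_le_smul (α := ‖θ 1‖) (β := ‖θ (star z * z)‖)
    (hθ.map_nonneg hxx) (hθ.map_nonneg hyy)
    (horth _ _ hxx hyy (by rw [mul_assoc, ← mul_assoc x y, hxy, zero_mul, mul_zero])) ?_ ?_
  · have := hθ.star_map_mul_map_le_norm_smul 1 x
    simpa [hx'.star_eq] using this
  · have hzy : star z * y = star (y * z) := by rw [star_mul, hy'.star_eq]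
    have := hθ.star_map_mul_map_le_norm_smul z y
    rwa [hzy, hθ.map_star, star_star, hy'.star_eq] at this

theorem map_mul_map (hθ : CompletelyPositive θ)
    (horth : ∀ x y : A, 0 ≤ x → 0 ≤ y → x * y = 0 → θ x * θ y = 0) (a b : A) :
    θ a * θ b = θ 1 * θ (a * b) := by
  let β : A →ₗ[ℂ] A →ₗ[ℂ] B := (LinearMap.mul ℂ B).compl₁₂ θ (θ ∘ₗ LinearMap.mulRight ℂ b)
  have h := β.apply_one_eq_of_orthogonal (‖θ 1‖ * √(‖θ 1‖ * ‖θ (star b * b)‖))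
    (fun x y hx hy hxy => hθ.map_mul_map_mul_eq_zero horth hx hy hxy b)
    (fun x y hx hx1 hy hy1 => (norm_mul_le _ _).trans <|
      mul_le_mul (hθ.norm_map_le_norm_map_one hx hx1) (hθ.norm_map_mul_le hy hy1 b)
        (norm_nonneg _) (norm_nonneg _)) a
  simpa [β] using h

end CompletelyPositive

/-- For a completely positive map `θ : A → B` with `A` unital, `θ` is order zero if and only if
`θ(a)θ(b) = θ(1)θ(ab)` for all `a, b ∈ A`. -/
theorem stmt2 {A B : Type*} [CStarAlgebra A] [NonUnitalCStarAlgebra B] (θ : A →ₗ[ℂ] B)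
    (hcp : CompletelyPositive θ) :
    (∀ a b : A, (∃ c, a = star c * c) → (∃ c, b = star c * c) → a * b = 0 →
        θ a * θ b = 0) ↔
      ∀ a b : A, θ a * θ b = θ 1 * θ (a * b) := by
  let _ := CStarAlgebra.spectralOrder A
  let _ := CStarAlgebra.spectralOrderedRing A
  let _ := CStarAlgebra.spectralOrder B
  let _ := CStarAlgebra.spectralOrderedRing B
  simp only [← CStarAlgebra.nonneg_iff_eq_star_mul_self]
  exact ⟨hcp.map_mul_map, fun h a b _ _ hab => by rw [h, hab, map_zero, mul_zero]⟩

end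
end

section
/- Let θ : A → B be an isometric completely positive order zero map between C*-algebras with B = C*(θ(A)), and let θ̂ : C_0((0,1], A) → B be the induced surjective *-homomorphism from the cone of A with θ̂ ∘ ι = θ, where ι(a) = id_{(0,1]} ⊗ a. Then the induced *-homomorphism φ : A → B/θ̂(SA), where SA = C_0((0,1), A) is the suspension, is injective (hence a *-isomorphism onto B/θ̂(SA)). -/
/-!
If `θ a = θ̂ f` with `f(1) = 0`, left-multiply both `ι a` and `f` by the same product of adjoints
of iterated star-squares of `ι a`; the two results have equal images under `θ̂`. By the
C⋆-identity and isometry of `θ`, the first image has norm `‖a‖ ^ 2 ^ k`. The second element has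
pointwise norm at most `(t‖a‖) ^ (2 ^ k - 1) ‖f t‖`, and since `f` vanishes at `1` this is at most
`‖a‖ ^ (2 ^ k - 1) ‖a‖ / 2` for large `k`. As `θ̂` is contractive, this contradicts `a ≠ 0`.
-/

open scoped ENNReal Matrix
open Filter

noncomputable section

open scoped ZeroAtInfty

section StarSq

variable {R : Type*} [Mul R] [Star R]

def starSq (x : R) : ℕ → R
  | 0 => x
  | k + 1 => star (starSq x k) * starSq x k

/-- `starSq x k` written as a product ends in the factor `x`; `starSqMul x y k` is that product
with this last factor replaced by `y`. -/
def starSqMul (x y : R) : ℕ → R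
  | 0 => y
  | k + 1 => star (starSq x k) * starSqMul x y k

theorem starSqMul_self (x : R) (k : ℕ) : starSqMul x x k = starSq x k := by
  induction k with
  | zero => rfl
  | succ k ih => rw [starSqMul, starSq, ih]

theorem map_starSq {S F : Type*} [Mul S] [Star S] [FunLike F R S] [MulHomClass F R S]
    [StarHomClass F R S] (φ : F) (x : R) (k : ℕ) : φ (starSq x k) = starSq (φ x) k := by
  induction k with
  | zero => rfl
  | succ k ih => rw [starSq, starSq, map_mul, map_star, ih]

theorem map_starSqMul {S F : Type*} [Mul S] [Star S] [FunLike F R S] [MulHomClass F R S]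
    [StarHomClass F R S] (φ : F) (x y : R) (k : ℕ) :
    φ (starSqMul x y k) = starSqMul (φ x) (φ y) k := by
  induction k with
  | zero => rfl
  | succ k ih => rw [starSqMul, starSqMul, map_mul, map_star, map_starSq, ih]

end StarSq

section Norm

variable {R : Type*} [NonUnitalNormedRing R] [StarRing R] [CStarRing R]

theorem norm_starSq (x : R) (k : ℕ) : ‖starSq x k‖ = ‖x‖ ^ 2 ^ k := by
  induction k with
  | zero => simp [starSq]
  | succ k ih => rw [starSq, CStarRing.norm_star_mul_self, ih, ← pow_add, pow_succ, mul_two]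

theorem norm_starSqMul_le (x y : R) (k : ℕ) : ‖starSqMul x y k‖ ≤ ‖x‖ ^ (2 ^ k - 1) * ‖y‖ := by
  induction k with
  | zero => simp [starSqMul]
  | succ k ih =>
    have hexp : 2 ^ (k + 1) - 1 = 2 ^ k + (2 ^ k - 1) := by
      have := Nat.one_le_two_pow (n := k)
      rw [pow_succ]
      omega
    calc ‖starSqMul x y (k + 1)‖ ≤ ‖starSq x k‖ * ‖starSqMul x y k‖ := by
          rw [starSqMul, ← norm_star (starSq x k)]
          exact norm_mul_le _ _
      _ ≤ ‖x‖ ^ 2 ^ k * (‖x‖ ^ (2 ^ k - 1) * ‖y‖) := by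
          rw [norm_starSq]
          gcongr
      _ = ‖x‖ ^ (2 ^ (k + 1) - 1) * ‖y‖ := by rw [hexp, pow_add, mul_assoc]

end Norm

namespace ZeroAtInftyContinuousMap

variable {α β : Type*} [TopologicalSpace α]

theorem starSq_apply [NonUnitalNormedRing β] [StarRing β] [ContinuousStar β]
    (g : C₀(α, β)) (k : ℕ) (t : α) : starSq g k t = starSq (g t) k := by
  induction k with
  | zero => rfl
  | succ k ih => rw [starSq, starSq, mul_apply, star_apply, ih]

theorem starSqMul_apply [NonUnitalNormedRing β] [StarRing β] [ContinuousStar β]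
    (g h : C₀(α, β)) (k : ℕ) (t : α) : starSqMul g h k t = starSqMul (g t) (h t) k := by
  induction k with
  | zero => rfl
  | succ k ih => rw [starSqMul, starSqMul, mul_apply, star_apply, starSq_apply, ih]

theorem norm_starSqMul_le_of_forall [NonUnitalNormedRing β] [StarRing β] [CStarRing β]
    (g h : C₀(α, β)) (k : ℕ) (w : α → ℝ) (hg : ∀ t, ‖g t‖ ≤ w t) {ε : ℝ} (hε : 0 ≤ ε)
    (hh : ∀ t, w t ^ (2 ^ k - 1) * ‖h t‖ ≤ ε) : ‖starSqMul g h k‖ ≤ ε := by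
  refine (BoundedContinuousFunction.norm_le hε).mpr fun t => ?_
  calc ‖starSqMul g h k t‖ ≤ ‖g t‖ ^ (2 ^ k - 1) * ‖h t‖ := by
        rw [starSqMul_apply]
        exact norm_starSqMul_le _ _ _
    _ ≤ w t ^ (2 ^ k - 1) * ‖h t‖ := by gcongr; exact hg t
    _ ≤ ε := hh t

theorem exists_pow_mul_norm_le {E : Type*} [NormedAddCommGroup E] (f : C₀(Set.Ioc (0:ℝ) 1, E))
    (hf : f ⟨1, Set.right_mem_Ioc.mpr one_pos⟩ = 0) {ε : ℝ} (hε : 0 < ε) :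
    ∃ N : ℕ, ∀ n, N ≤ n → ∀ t : Set.Ioc (0:ℝ) 1, (t : ℝ) ^ n * ‖f t‖ ≤ ε := by
  obtain ⟨δ, hδ, hnear⟩ := Metric.continuousAt_iff.mp (map_continuous f).continuousAt ε hε
  set r := max (1 - δ) 0
  have hr : r < 1 := max_lt (by linarith) one_pos
  obtain ⟨N, hN⟩ := exists_pow_lt_of_lt_one (div_pos hε (by positivity : 0 < ‖f‖ + 1)) hr
  refine ⟨N, fun n hn t => ?_⟩
  have ht0 : (0:ℝ) ≤ t := t.2.1.le
  rcases le_or_gt (t : ℝ) r with htr | htr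
  · calc (t : ℝ) ^ n * ‖f t‖ ≤ r ^ N * (‖f‖ + 1) := by
          gcongr
          · exact (pow_le_pow_left₀ ht0 htr n).trans
              (pow_le_pow_of_le_one (le_max_right _ _) hr.le hn)
          · exact (f.toBCF.norm_coe_le_norm t).trans (le_add_of_nonneg_right zero_le_one)
      _ ≤ ε := ((lt_div_iff₀ (by positivity)).mp hN).le
  · have hdist : dist t ⟨1, Set.right_mem_Ioc.mpr one_pos⟩ < δ := by
      rw [Subtype.dist_eq, Real.dist_eq, abs_sub_lt_iff]
      constructor <;> linarith [t.2.2, le_max_left (1 - δ) 0]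
    have hft : ‖f t‖ < ε := by simpa only [hf, dist_zero_right] using hnear hdist
    calc (t : ℝ) ^ n * ‖f t‖ ≤ 1 * ‖f t‖ := by gcongr; exact pow_le_one₀ ht0 t.2.2
      _ ≤ ε := by linarith

end ZeroAtInftyContinuousMap

theorem stmt5_general {A B : Type*} [NonUnitalCStarAlgebra A] [NonUnitalCStarAlgebra B]
    (θ : A →ₗ[ℂ] B)
    (hiso : ∀ a, ‖θ a‖ = ‖a‖)
    (ι : A → C₀(↥(Set.Ioc (0:ℝ) 1), A))
    (hι : ∀ (a : A) (t : ↥(Set.Ioc (0:ℝ) 1)), ι a t = (t : ℝ) • a)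
    (θhat : C₀(↥(Set.Ioc (0:ℝ) 1), A) →⋆ₙₐ[ℂ] B)
    (hfact : ∀ a : A, θhat (ι a) = θ a) :
    ∀ a : A, a ≠ 0 →
      θ a ∉ θhat '' {f : C₀(↥(Set.Ioc (0:ℝ) 1), A) |
        f ⟨1, Set.right_mem_Ioc.mpr one_pos⟩ = 0} := by
  rintro a ha ⟨f, hf1, hfθ⟩
  have ha' : 0 < ‖a‖ := norm_pos_iff.mpr ha
  obtain ⟨N, hN⟩ := ZeroAtInftyContinuousMap.exists_pow_mul_norm_le f hf1 (half_pos ha')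
  have hn : N ≤ 2 ^ N - 1 := Nat.le_sub_one_of_lt N.lt_two_pow_self
  have hsame : θhat (starSq (ι a) N) = θhat (starSqMul (ι a) f N) := by
    rw [← starSqMul_self, map_starSqMul, map_starSqMul, hfact, hfθ]
  have hupper : ‖starSqMul (ι a) f N‖ ≤ ‖a‖ ^ (2 ^ N - 1) * (‖a‖ / 2) :=
    ZeroAtInftyContinuousMap.norm_starSqMul_le_of_forall _ _ N
      (fun t : Set.Ioc (0:ℝ) 1 => (t : ℝ) * ‖a‖)
      (fun t => by rw [hι, norm_smul, Real.norm_of_nonneg t.2.1.le]) (by positivity)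
      (fun t => by
        rw [mul_pow, mul_comm _ (‖a‖ ^ _), mul_assoc]
        gcongr
        exact hN _ hn t)
  have hcontra : ‖a‖ ^ 2 ^ N ≤ ‖a‖ ^ (2 ^ N - 1) * (‖a‖ / 2) :=
    calc ‖a‖ ^ 2 ^ N = ‖θhat (starSq (ι a) N)‖ := by rw [map_starSq, hfact, norm_starSq, hiso]
      _ = ‖θhat (starSqMul (ι a) f N)‖ := by rw [hsame]
      _ ≤ ‖starSqMul (ι a) f N‖ := NonUnitalStarAlgHom.norm_apply_le θhat _
      _ ≤ ‖a‖ ^ (2 ^ N - 1) * (‖a‖ / 2) := hupper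
  rw [← pow_sub_one_mul (pow_ne_zero N two_ne_zero)] at hcontra
  linarith [le_of_mul_le_mul_left hcontra (pow_pos ha' _)]

/-- Let `θ : A → B` be an isometric completely positive order zero map with
`B = C*(θ(A))`, and let `θ̂ : C₀((0,1], A) → B` be the induced surjective ⋆-homomorphism from
the cone of `A` with `θ̂ ∘ ι = θ`, where `ι(a) = id_{(0,1]} ⊗ a`.  Then the induced
⋆-homomorphism `φ : A → B / θ̂(SA)` is injective, i.e. for `a ≠ 0` the element `θ(a)` does not
lie in the image under `θ̂` of the suspension `SA = C₀((0,1), A)` (the functions in the cone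
vanishing at `1`). -/
theorem stmt5 {A B : Type*} [NonUnitalCStarAlgebra A] [NonUnitalCStarAlgebra B]
    (θ : A →ₗ[ℂ] B)
    (hiso : ∀ a, ‖θ a‖ = ‖a‖)
    (hcp : CompletelyPositive θ)
    (hoz : ∀ a b : A, (∃ c, a = star c * c) → (∃ c, b = star c * c) → a * b = 0 →
      θ a * θ b = 0)
    (hgen : closure (↑(NonUnitalStarAlgebra.adjoin ℂ (Set.range θ)) : Set B) = Set.univ)
    (ι : A → C₀(↥(Set.Ioc (0:ℝ) 1), A))
    (hι : ∀ (a : A) (t : ↥(Set.Ioc (0:ℝ) 1)), ι a t = (t : ℝ) • a)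
    (θhat : C₀(↥(Set.Ioc (0:ℝ) 1), A) →⋆ₙₐ[ℂ] B)
    (hθhat : Function.Surjective θhat)
    (hfact : ∀ a : A, θhat (ι a) = θ a) :
    ∀ a : A, a ≠ 0 →
      θ a ∉ θhat '' {f : C₀(↥(Set.Ioc (0:ℝ) 1), A) |
        f ⟨1, Set.right_mem_Ioc.mpr one_pos⟩ = 0} :=
  stmt5_general θ hiso ι hι θhat hfact
end
end
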